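/- Let K be a field and n ≥ 1. Let E_1 be the n-by-n lower triangular matrix of ones (row i has exponent vector e_{1,i} with e_{1,i,j} = 1 for j ≤ i, else 0) and let E_2 be its row reversal (e_{2,i} = e_{1,n+1−i}). Let c_{1,i}, c_{2,i} ∈ K, for i = 1, …, n, satisfy: c_{1,i} c_{1,n+1−i} − c_{2,i} c_{2,n+1−i} ≠ 0 whenever i ≠ n+1−i, and c_{1,i} + c_{2,i} ≠ 0 whenever 2i = n+1. Then for every b ∈ K^n the two-column system c_{1,i} · Π_{j=1}^{i} x_j + c_{2,i} · Π_{j=1}^{n+1−i} x_j = b_i (i = 1, …, n) has at most one solution x ∈ K^n with all coordinates x_j nonzero. -/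
import Mathlib


/-- For the two-column monomial system with exponent matrices the lower triangular
matrix of ones and its row reversal, under the stated nondegeneracy conditions on the
coefficient vectors, the system `c₁ᵢ x₁⋯xᵢ + c₂ᵢ x₁⋯x_{n+1-i} = bᵢ` has at most one
solution with all coordinates nonzero.  (In 0-based indexing, the partner of row `i`
is `i.rev = n - 1 - i`.) -/
theorem two_column_monomial_system_at_most_one_solution {K : Type*} [Field K]
    (n : ℕ) (hn : 1 ≤ n) (c1 c2 : Fin n → K)
    (h1 : ∀ i : Fin n, i ≠ i.rev → c1 i * c1 i.rev - c2 i * c2 i.rev ≠ 0)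
    (h2 : ∀ i : Fin n, i = i.rev → c1 i + c2 i ≠ 0)
    (b : Fin n → K) (x y : Fin n → K)
    (hx0 : ∀ j, x j ≠ 0) (hy0 : ∀ j, y j ≠ 0)
    (hx : ∀ i : Fin n,
      c1 i * ∏ j ∈ Finset.Iic i, x j + c2 i * ∏ j ∈ Finset.Iic i.rev, x j = b i)
    (hy : ∀ i : Fin n,
      c1 i * ∏ j ∈ Finset.Iic i, y j + c2 i * ∏ j ∈ Finset.Iic i.rev, y j = b i) :
    x = y := by
  -- Step 1: the monomial values agree.
  have key : ∀ i : Fin n, (∏ j ∈ Finset.Iic i, x j) = ∏ j ∈ Finset.Iic i, y j := by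
    intro i
    by_cases hc : i = i.rev
    · have e1 := hx i
      have e3 := hy i
      rw [← hc] at e1 e3
      have hne := h2 i hc
      have hx' : (c1 i + c2 i) * ∏ j ∈ Finset.Iic i, x j = b i := by linear_combination e1
      have hy' : (c1 i + c2 i) * ∏ j ∈ Finset.Iic i, y j = b i := by linear_combination e3
      exact mul_left_cancel₀ hne (hx'.trans hy'.symm)
    · have e1 := hx i
      have e2 := hx i.rev
      have e3 := hy i
      have e4 := hy i.rev
      rw [Fin.rev_rev] at e2 e4
      have hdet := h1 i hc
      have hz : (c1 i * c1 i.rev - c2 i * c2 i.rev) *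
          ((∏ j ∈ Finset.Iic i, x j) - ∏ j ∈ Finset.Iic i, y j) = 0 := by
        linear_combination c1 i.rev * e1 - c2 i * e2 - c1 i.rev * e3 + c2 i * e4
      rcases mul_eq_zero.mp hz with h | h
      · exact absurd h hdet
      · exact sub_eq_zero.mp h
  -- Step 2: recover x = y by strong induction on the index.
  suffices h : ∀ m : ℕ, ∀ i : Fin n, i.val = m → x i = y i by
    funext i; exact h i.val i rfl
  intro m
  induction m using Nat.strong_induction_on with
  | _ m ih =>
    intro i him
    have hi := key i
    rw [← Finset.Iio_insert i, Finset.prod_insert (by simp),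
      Finset.prod_insert (by simp)] at hi
    have hprod : (∏ j ∈ Finset.Iio i, x j) = ∏ j ∈ Finset.Iio i, y j :=
      Finset.prod_congr rfl fun j hj => ih j.val (him ▸ (Fin.lt_iff_val_lt_val.mp (Finset.mem_Iio.mp hj))) j rfl
    rw [hprod] at hi
    have : (∏ j ∈ Finset.Iio i, y j) ≠ 0 := Finset.prod_ne_zero_iff.mpr fun j _ => hy0 j
    exact mul_right_cancel₀ this hi
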